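/- Let B1 and B2 be unital C*-subalgebras of M_N and B a unital C*-subalgebra of B1. For every unitary u in the norm closure of Z(B1,B2;[B]) in U(M_N), there exists a unitary v in B1 such that vBv* ⊆ uB2u* ∩ B1. Consequently, the closure of Z(B1,B2;[B]) is contained in the union of the sets Z(B1,B2;[C]) over all unital C*-subalgebras C of B1 with [C] ≥ [B]. -/

import Mathlib

open scoped Matrix.Norms.L2Operator

set_option synthInstance.maxHeartbeats 1000000
set_option maxHeartbeats 1000000

noncomputable section

abbrev MatN (N : ℕ) := Matrix (Fin N) (Fin N) ℂ

/-- The perturbation `u S u*` of a set of matrices by a unitary. -/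
def conjSet {N : ℕ} (u : MatN N) (S : Set (MatN N)) : Set (MatN N) :=
  (fun x => u * x * star u) '' S

/-- `B ∼_{B1} C`: the subalgebras `B` and `C` are conjugate by a unitary of `B1`. -/
def equivIn {N : ℕ} (B1 : StarSubalgebra ℂ (MatN N)) (B C : StarSubalgebra ℂ (MatN N)) : Prop :=
  ∃ v : MatN N, v ∈ unitary (MatN N) ∧ v ∈ B1 ∧
    conjSet v (B : Set (MatN N)) = (C : Set (MatN N))

/-- `Z(B1,B2;[B]) = { u ∈ U(M_N) : u B2 u* ∩ B1 ∼_{B1} B }`. -/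
def Zset {N : ℕ} (B1 B2 B : StarSubalgebra ℂ (MatN N)) : Set (MatN N) :=
  {u | u ∈ unitary (MatN N) ∧ ∃ v : MatN N, v ∈ unitary (MatN N) ∧ v ∈ B1 ∧
    conjSet v (B : Set (MatN N)) = conjSet u (B2 : Set (MatN N)) ∩ (B1 : Set (MatN N))}

/-!
The witnesses `v` for `u ∈ Z(B1,B2;[B])` range over the compact set `U(M_N) ∩ B1`, and the relaxed
relation `v B v* ⊆ u B2 u* ∩ B1` is closed in `(u, v)` since `B1` and `B2` are closed. So the set
of `u` admitting such a `v` is the projection of a closed set along a compact factor, hence closed,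
and it contains `Z(B1,B2;[B])`. For `u` in it, `C = u B2 u* ∩ B1` contains the conjugate `v B v*`
of `B`, and `u ∈ Z(B1,B2;[C])` with witness `1`.
-/

theorem norm_le_one_of_mem_unitary {E : Type*} [NormedRing E] [StarRing E] [CStarRing E]
    {u : E} (hu : u ∈ unitary E) : ‖u‖ ≤ 1 := by
  rcases subsingleton_or_nontrivial E with _ | _
  · simp [Subsingleton.elim u 0]
  · exact (CStarRing.norm_of_mem_unitary hu).le

theorem isCompact_unitary {E : Type*} [NormedRing E] [StarRing E] [CStarRing E] [ProperSpace E] :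
    IsCompact (unitary E : Set E) :=
  Metric.isCompact_of_isClosed_isBounded isClosed_unitary <|
    (Metric.isBounded_closedBall (x := (0 : E)) (r := 1)).subset fun _ hu =>
      mem_closedBall_zero_iff.mpr (norm_le_one_of_mem_unitary hu)

theorem IsClosed.image_fst_of_isCompact {X Y : Type*} [TopologicalSpace X]
    [TopologicalSpace Y] {K : Set (X × Y)} {C : Set Y} (hK : IsClosed K) (hC : IsCompact C)
    (hKC : ∀ p ∈ K, p.2 ∈ C) : IsClosed (Prod.fst '' K) := by
  have := isCompact_iff_compactSpace.mp hC
  let ι : X × C → X × Y := Prod.map id Subtype.val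
  have hK' : IsClosed (ι ⁻¹' K) := hK.preimage (by fun_prop)
  convert isClosedMap_fst_of_compactSpace _ hK' using 1
  ext x
  constructor
  · rintro ⟨p, hp, rfl⟩
    exact ⟨(p.1, ⟨p.2, hKC p hp⟩), hp, rfl⟩
  · rintro ⟨p, hp, rfl⟩
    exact ⟨ι p, hp, rfl⟩

namespace MatN

variable {N : ℕ}

theorem isClosed_starSubalgebra (A : StarSubalgebra ℂ (MatN N)) : IsClosed (A : Set (MatN N)) :=
  Submodule.closed_of_finiteDimensional (Subalgebra.toSubmodule A.toSubalgebra)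

theorem mem_conjSet_iff {u : MatN N} (hu : u ∈ unitary (MatN N)) {S : Set (MatN N)}
    {x : MatN N} : x ∈ conjSet u S ↔ star u * x * u ∈ S := by
  have hu' := Unitary.mem_iff.mp hu
  constructor
  · rintro ⟨y, hy, rfl⟩
    simpa [mul_assoc, ← mul_assoc (star u) u, hu'.1] using hy
  · intro hx
    refine ⟨_, hx, ?_⟩
    simp [mul_assoc, ← mul_assoc u (star u), hu'.2]

theorem conjSet_one (S : Set (MatN N)) : conjSet 1 S = S := by
  simp [conjSet]

theorem conjSet_star_conjSet {v : MatN N} (hv : v ∈ unitary (MatN N)) (S : Set (MatN N)) :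
    conjSet (star v) (conjSet v S) = S := by
  have hv' := Unitary.mem_iff.mp hv
  simp only [conjSet, Set.image_image, star_star]
  convert Set.image_id S using 2 with x
  simp [mul_assoc, ← mul_assoc (star v) v, hv'.1]

def conj {u : MatN N} (hu : u ∈ unitary (MatN N)) (A : StarSubalgebra ℂ (MatN N)) :
    StarSubalgebra ℂ (MatN N) :=
  A.map (Unitary.conjStarAlgAut ℂ (MatN N) ⟨u, hu⟩).toStarAlgHom

theorem coe_conj {u : MatN N} (hu : u ∈ unitary (MatN N)) (A : StarSubalgebra ℂ (MatN N)) :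
    (conj hu A : Set (MatN N)) = conjSet u A :=
  rfl

variable (B1 B2 B : StarSubalgebra ℂ (MatN N))

/-- Pairs `(u, v)` with `v ∈ U(M_N) ∩ B1` and `v B v* ⊆ u B2 u* ∩ B1`, where membership in
`u B2 u*` is tested as `u* (v b v*) u ∈ B2` so that the condition is closed in `u` too. -/
def witnessPairs : Set (MatN N × MatN N) :=
  {p | p.2 ∈ unitary (MatN N) ∧ p.2 ∈ B1 ∧
    ∀ b ∈ B, star p.1 * (p.2 * b * star p.2) * p.1 ∈ B2 ∧ p.2 * b * star p.2 ∈ B1}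

theorem isClosed_witnessPairs : IsClosed (witnessPairs B1 B2 B) := by
  have hB1 := isClosed_starSubalgebra B1
  have hB2 := isClosed_starSubalgebra B2
  refine (isClosed_unitary.preimage continuous_snd).inter
    ((hB1.preimage continuous_snd).inter ?_)
  show IsClosed {_p | _}
  simp only [Set.ofPred_forall]
  exact isClosed_biInter fun b _ =>
    (hB2.preimage (by fun_prop)).inter (hB1.preimage (by fun_prop))

theorem Zset_subset_image_fst_witnessPairs :
    Zset B1 B2 B ⊆ Prod.fst '' witnessPairs B1 B2 B := by
  rintro u ⟨hu, v, hv, hvB1, hconj⟩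
  refine ⟨(u, v), ⟨hv, hvB1, fun b hb => ?_⟩, rfl⟩
  have hmem : v * b * star v ∈ conjSet u B2 ∩ B1 := hconj ▸ ⟨b, hb, rfl⟩
  exact ⟨(mem_conjSet_iff hu).mp hmem.1, hmem.2⟩

theorem closure_Zset_subset_image_fst_witnessPairs :
    closure (Zset B1 B2 B) ⊆ Prod.fst '' witnessPairs B1 B2 B :=
  closure_minimal (Zset_subset_image_fst_witnessPairs B1 B2 B) <|
    (isClosed_witnessPairs B1 B2 B).image_fst_of_isCompact
      (isCompact_unitary.inter_right (isClosed_starSubalgebra B1)) fun _ hp => ⟨hp.1, hp.2.1⟩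

theorem conjSet_subset_of_mem_witnessPairs {u v : MatN N} (hu : u ∈ unitary (MatN N))
    (h : (u, v) ∈ witnessPairs B1 B2 B) : conjSet v B ⊆ conjSet u B2 ∩ B1 := by
  rintro _ ⟨b, hb, rfl⟩
  exact ⟨(mem_conjSet_iff hu).mpr (h.2.2 b hb).1, (h.2.2 b hb).2⟩

theorem closure_Zset_subset_unitary : closure (Zset B1 B2 B) ⊆ unitary (MatN N) :=
  closure_minimal (fun _ hu => hu.1) isClosed_unitary

theorem equivIn_conj {v : MatN N} (hv : v ∈ unitary (MatN N)) (hvB1 : v ∈ B1) :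
    equivIn B1 (conj hv B) B :=
  ⟨star v, Unitary.star_mem hv, star_mem hvB1, by rw [coe_conj, conjSet_star_conjSet hv]⟩

theorem mem_Zset_conj_inf {u : MatN N} (hu : u ∈ unitary (MatN N)) :
    u ∈ Zset B1 B2 (conj hu B2 ⊓ B1) :=
  ⟨hu, 1, one_mem _, one_mem B1, by rw [conjSet_one]; rfl⟩

end MatN

open MatN in
theorem closure_Z_subset_union_general (N : ℕ)
    (B1 B2 : StarSubalgebra ℂ (MatN N))
    (B : StarSubalgebra ℂ (MatN N)) :
    (∀ u : MatN N, u ∈ unitary (MatN N) → u ∈ closure (Zset B1 B2 B) →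
      ∃ v : MatN N, v ∈ unitary (MatN N) ∧ v ∈ B1 ∧
        conjSet v (B : Set (MatN N)) ⊆
          conjSet u (B2 : Set (MatN N)) ∩ (B1 : Set (MatN N))) ∧
    closure (Zset B1 B2 B) ⊆
      ⋃ (C : StarSubalgebra ℂ (MatN N)) (_ : C ≤ B1)
        (_ : ∃ D : StarSubalgebra ℂ (MatN N), D ≤ C ∧ equivIn B1 D B),
        Zset B1 B2 C := by
  have key : ∀ u ∈ unitary (MatN N), u ∈ closure (Zset B1 B2 B) →
      ∃ v ∈ unitary (MatN N), v ∈ B1 ∧ conjSet v B ⊆ conjSet u B2 ∩ B1 := by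
    intro u hu hcl
    obtain ⟨⟨_, v⟩, hp, rfl⟩ := closure_Zset_subset_image_fst_witnessPairs B1 B2 B hcl
    exact ⟨v, hp.1, hp.2.1, conjSet_subset_of_mem_witnessPairs B1 B2 B hu hp⟩
  refine ⟨key, fun u hcl => ?_⟩
  have hu := closure_Zset_subset_unitary B1 B2 B hcl
  obtain ⟨v, hv, hvB1, hsub⟩ := key u hu hcl
  simp only [Set.mem_iUnion]
  exact ⟨conj hu B2 ⊓ B1, inf_le_right,
    ⟨conj hv B, fun _ hx => hsub hx, equivIn_conj B1 B hv hvB1⟩,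
    mem_Zset_conj_inf B1 B2 hu⟩

/-- For every unitary `u` in the closure of `Z(B1,B2;[B])` there is a unitary `v ∈ B1` with
`v B v* ⊆ u B2 u* ∩ B1`; consequently the closure of `Z(B1,B2;[B])` is contained in the union
of the `Z(B1,B2;[C])` over the classes `[C] ≥ [B]`. -/
theorem closure_Z_subset_union (N : ℕ) (hN : 0 < N)
    (B1 B2 : StarSubalgebra ℂ (MatN N))
    (B : StarSubalgebra ℂ (MatN N)) (hB : B ≤ B1) :
    (∀ u : MatN N, u ∈ unitary (MatN N) → u ∈ closure (Zset B1 B2 B) →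
      ∃ v : MatN N, v ∈ unitary (MatN N) ∧ v ∈ B1 ∧
        conjSet v (B : Set (MatN N)) ⊆
          conjSet u (B2 : Set (MatN N)) ∩ (B1 : Set (MatN N))) ∧
    closure (Zset B1 B2 B) ⊆
      ⋃ (C : StarSubalgebra ℂ (MatN N)) (_ : C ≤ B1)
        (_ : ∃ D : StarSubalgebra ℂ (MatN N), D ≤ C ∧ equivIn B1 D B),
        Zset B1 B2 C :=
  closure_Z_subset_union_general N B1 B2 B
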